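/- Let d ≥ 1, σ ≥ 0, let n₁,…,n_d ≥ 1 be integers, and let γ > 0 satisfy γ < min_i n_i². Set W_γ = { j ∈ J_d : λ_j ≤ γ }. Let (W_k), indexed by the grid multi-indices k with 1 ≤ k_i ≤ n_i, be mutually independent standard normal N(0,1) random variables, and let ε_k be reals with |ε_k| ≤ ε_max. Then E[ ∑_{j ∈ W_γ} λ_j^σ ( (π^d/∏_{i=1}^d n_i) ∑_k ε_k W_k ξ_j(x_k) )² ] ≤ ε_max² · (2π^{3d/2}/(d · Γ(d/2))) · γ^{σ+d/2} / ∏_{i=1}^d n_i. -/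

import Mathlib

open Real MeasureTheory ProbabilityTheory

/-- `λ_j = j_1² + ⋯ + j_d²` for a multi-index `j` of positive integers. -/
def lamMulti {d : ℕ} (j : Fin d → ℕ+) : ℝ := ∑ i, ((j i : ℕ) : ℝ) ^ 2

/-- Dirichlet eigenfunction `ξ_j(x) = (2/π)^{d/2} ∏ᵢ sin(jᵢ xᵢ)` on `(0,π)^d`. -/
noncomputable def xiMulti {d : ℕ} (j : Fin d → ℕ+) (x : Fin d → ℝ) : ℝ :=
  (2 / π) ^ ((d : ℝ) / 2) * ∏ i, Real.sin ((j i : ℕ) * x i)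

/-- Midpoint grid point in one coordinate: `(2k−1)π/(2n)`. -/
noncomputable def gridPt (n k : ℕ) : ℝ := (2 * (k : ℝ) - 1) * π / (2 * n)

open scoped ENNReal NNReal

/-!
For a fixed mode `j`, independence together with `E W_k = 0` and `E W_k² = 1` turns the expected
square of `(π^d / ∏ nᵢ) ∑_k ε_k W_k ξ_j(x_k)` into `(π^d / ∏ nᵢ)² ∑_k ε_k² ξ_j(x_k)²`, which is at
most `(2π)^d ε_max² / ∏ nᵢ` because `ξ_j² ≤ (2/π)^d`; on the modes with `λ_j ≤ γ` also
`λ_j^σ ≤ γ^σ`. It remains to count these modes: the cube `∏ᵢ (jᵢ - 1, jᵢ]` and its `2^d - 1`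
reflections in the coordinate hyperplanes are disjoint unit cubes inside the ball of radius `√γ`,
so `2^d · #{j : λ_j ≤ γ} ≤ vol B(√γ) = π^{d/2} γ^{d/2} / Γ(d/2 + 1)`.
-/

lemma tsum_ite_eq_sum_toFinset {α : Type*} {p : α → Prop} [DecidablePred p]
    (hp : {a | p a}.Finite) (f : α → ℝ) :
    ∑' a, (if p a then f a else 0) = ∑ a ∈ hp.toFinset, f a := by
  rw [tsum_eq_sum (s := hp.toFinset) fun a ha => if_neg (by simpa using ha)]
  exact Finset.sum_congr rfl fun a ha => if_pos (by simpa using ha)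

section GaussianSums
variable {Ω : Type*} [MeasurableSpace Ω] {P : Measure Ω}

lemma integral_sq_sum_mul_of_iIndepFun [IsProbabilityMeasure P] {ι : Type*} [Fintype ι]
    {W : ι → Ω → ℝ} (hL2 : ∀ k, MemLp (W k) 2 P) (hindep : iIndepFun W P)
    (hmean : ∀ k, P[W k] = 0) (hvar : ∀ k, Var[W k; P] = 1) (c : ι → ℝ) :
    ∫ ω, (∑ k, c k * W k ω) ^ 2 ∂P = ∑ k, c k ^ 2 := by
  set X : ι → Ω → ℝ := fun k ω => c k * W k ω
  have hXL2 : ∀ k, MemLp (X k) 2 P := fun k => (hL2 k).const_mul (c k)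
  have hmean_sum : P[∑ k, X k] = 0 := by
    simp [Finset.sum_apply, integral_finsetSum _ fun k _ => (hXL2 k).integrable one_le_two,
      X, integral_const_mul, hmean]
  have hvar_sum : Var[∑ k, X k; P] = ∑ k, c k ^ 2 := by
    rw [IndepFun.variance_sum fun k _ => hXL2 k]
    · simp [X, variance_const_mul, hvar]
    · intro k _ l _ hkl
      exact (hindep.indepFun hkl).comp (measurable_const_mul (c k)) (measurable_const_mul (c l))
  have := variance_eq_sub (memLp_finsetSum' Finset.univ fun k _ => hXL2 k)
  rw [hmean_sum, hvar_sum] at this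
  simpa [Finset.sum_apply, X] using this.symm

lemma hasLaw_of_map_eq {W : Ω → ℝ} {μ : Measure ℝ} [NeZero μ] (hW : P.map W = μ) :
    HasLaw W μ P :=
  ⟨aemeasurable_of_map_neZero (hW ▸ inferInstance), hW⟩

lemma memLp_of_map_eq_gaussianReal {W : Ω → ℝ} {m : ℝ} {v : ℝ≥0}
    (hW : P.map W = gaussianReal m v) (p : ℝ≥0) : MemLp W p P := by
  have := memLp_id_gaussianReal (μ := m) (v := v) p
  rwa [← hW, memLp_map_measure_iff aestronglyMeasurable_id (hasLaw_of_map_eq hW).aemeasurable]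
    at this

variable {κ : Type*} [Fintype κ] {W : κ → Ω → ℝ}

lemma integrable_sq_const_mul_sum (hW : ∀ k, P.map (W k) = gaussianReal 0 1) (ε ξ : κ → ℝ)
    (a : ℝ) : Integrable (fun ω => (a * ∑ k, ε k * W k ω * ξ k) ^ 2) P :=
  MemLp.integrable_sq <| (memLp_finsetSum _ fun k _ =>
    ((memLp_of_map_eq_gaussianReal (hW k) 2).const_mul (ε k)).mul_const (ξ k)).const_mul a

variable [IsProbabilityMeasure P]

lemma integral_sq_sum_mul_of_gaussianReal (hindep : iIndepFun W P)
    (hW : ∀ k, P.map (W k) = gaussianReal 0 1) (c : κ → ℝ) :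
    ∫ ω, (∑ k, c k * W k ω) ^ 2 ∂P = ∑ k, c k ^ 2 := by
  refine integral_sq_sum_mul_of_iIndepFun (fun k => memLp_of_map_eq_gaussianReal (hW k) 2)
    hindep (fun k => ?_) (fun k => ?_) c
  · rw [(hasLaw_of_map_eq (hW k)).integral_eq, integral_id_gaussianReal]
  · rw [(hasLaw_of_map_eq (hW k)).variance_eq, variance_id_gaussianReal, NNReal.coe_one]

lemma integral_sq_const_mul_sum_le (hindep : iIndepFun W P)
    (hW : ∀ k, P.map (W k) = gaussianReal 0 1) {ε ξ : κ → ℝ} {εmax B : ℝ}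
    (hε : ∀ k, |ε k| ≤ εmax) (hξ : ∀ k, ξ k ^ 2 ≤ B) (a : ℝ) :
    ∫ ω, (a * ∑ k, ε k * W k ω * ξ k) ^ 2 ∂P ≤ a ^ 2 * (Fintype.card κ * (εmax ^ 2 * B)) := by
  have hcoeff : ∀ k, (ε k * ξ k) ^ 2 ≤ εmax ^ 2 * B := fun k => by
    rw [mul_pow, ← sq_abs (ε k)]
    exact mul_le_mul (pow_le_pow_left₀ (abs_nonneg _) (hε k) 2) (hξ k) (sq_nonneg _)
      (sq_nonneg _)
  calc ∫ ω, (a * ∑ k, ε k * W k ω * ξ k) ^ 2 ∂P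
      = a ^ 2 * ∫ ω, (∑ k, (ε k * ξ k) * W k ω) ^ 2 ∂P := by
        rw [← integral_const_mul]
        congr 1 with ω
        rw [mul_pow]
        congr 2
        exact Finset.sum_congr rfl fun k _ => by ring
    _ = a ^ 2 * ∑ k, (ε k * ξ k) ^ 2 := by
        rw [integral_sq_sum_mul_of_gaussianReal hindep hW]
    _ ≤ a ^ 2 * (Fintype.card κ * (εmax ^ 2 * B)) := by
        gcongr
        simpa using Finset.sum_le_card_nsmul Finset.univ _ _ fun k _ => hcoeff k

end GaussianSums

lemma sq_le_lamMulti {d : ℕ} (j : Fin d → ℕ+) (i : Fin d) : ((j i : ℕ) : ℝ) ^ 2 ≤ lamMulti j :=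
  Finset.single_le_sum (f := fun i => ((j i : ℕ) : ℝ) ^ 2) (fun _ _ => sq_nonneg _)
    (Finset.mem_univ i)

lemma lamMulti_nonneg {d : ℕ} (j : Fin d → ℕ+) : 0 ≤ lamMulti j :=
  Finset.sum_nonneg fun _ _ => sq_nonneg _

lemma finite_setOf_lamMulti_le (d : ℕ) (γ : ℝ) : {j : Fin d → ℕ+ | lamMulti j ≤ γ}.Finite := by
  refine (Set.Finite.pi fun _ => (Set.finite_Iic ⌈γ⌉₊).preimage PNat.coe_injective.injOn).subset
    fun j hj i _ => ?_
  have hji : ((j i : ℕ) : ℝ) ≤ γ := calc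
    ((j i : ℕ) : ℝ) ≤ ((j i : ℕ) : ℝ) ^ 2 := by
      nlinarith [show (1 : ℝ) ≤ (j i : ℕ) by exact_mod_cast (j i).pos]
    _ ≤ lamMulti j := sq_le_lamMulti j i
    _ ≤ γ := hj
  exact_mod_cast hji.trans (Nat.le_ceil γ)

lemma xiMulti_sq_le {d : ℕ} (j : Fin d → ℕ+) (x : Fin d → ℝ) : xiMulti j x ^ 2 ≤ (2 / π) ^ d := by
  have h2π : 0 ≤ 2 / π := by positivity
  have hpow : ((2 / π) ^ ((d : ℝ) / 2)) ^ 2 = (2 / π) ^ d := by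
    rw [← rpow_natCast _ 2, ← rpow_mul h2π, ← rpow_natCast]; norm_num
  rw [xiMulti, mul_pow, hpow, ← Finset.prod_pow]
  exact mul_le_of_le_one_right (by positivity)
    (Finset.prod_le_one (fun _ _ => sq_nonneg _) fun _ _ => sin_sq_le_one _)

section LatticeCount
open Set Function

def intUnitCube {ι : Type*} (z : ι → ℤ) : Set (ι → ℝ) := univ.pi fun i => Ioc (z i : ℝ) (z i + 1)

lemma pairwise_disjoint_intUnitCube (ι : Type*) : Pairwise (Disjoint on intUnitCube (ι := ι)) := by
  intro z w hzw
  obtain ⟨i, hi⟩ := Function.ne_iff.mp hzw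
  exact disjoint_univ_pi.mpr ⟨i, pairwise_disjoint_Ioc_intCast ℝ hi⟩

lemma volume_intUnitCube {ι : Type*} [Fintype ι] (z : ι → ℤ) : volume (intUnitCube z) = 1 := by
  simp [intUnitCube, volume_pi_pi, Real.volume_Ioc]

lemma card_le_volume_of_intUnitCube_subset {ι : Type*} [Fintype ι] (T : Finset (ι → ℤ))
    {A : Set (ι → ℝ)} (hA : ∀ z ∈ T, intUnitCube z ⊆ A) : (T.card : ℝ≥0∞) ≤ volume A :=
  calc (T.card : ℝ≥0∞) = ∑ z ∈ T, volume (intUnitCube z) := by simp [volume_intUnitCube]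
    _ = volume (⋃ z ∈ T, intUnitCube z) :=
        (measure_biUnion_finset ((pairwise_disjoint_intUnitCube ι).set_pairwise _)
          fun _ _ => MeasurableSet.univ_pi fun _ => measurableSet_Ioc).symm
    _ ≤ volume A := measure_mono (iUnion₂_subset hA)

/-- The corner `z` of the cell `(z, z + 1]` equal to `(m - 1, m]` if `b`, and to its mirror image
`(-m, 1 - m]` otherwise. -/
def signedCellCorner (m : ℕ+) (b : Bool) : ℤ := if b then (m : ℤ) - 1 else -(m : ℤ)

lemma signedCellCorner_inj {m m' : ℕ+} {b b' : Bool} :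
    signedCellCorner m b = signedCellCorner m' b' ↔ m = m' ∧ b = b' := by
  refine ⟨fun h => ?_, fun ⟨hm, hb⟩ => hm ▸ hb ▸ rfl⟩
  have := m.pos
  have := m'.pos
  cases b <;> cases b' <;> simp only [signedCellCorner, Bool.false_eq_true, if_true, if_false] at h
    <;> simp only [and_true, reduceCtorEq, and_false, ← PNat.coe_inj] <;> omega

lemma abs_le_of_mem_Ioc_signedCellCorner {m : ℕ+} {b : Bool} {x : ℝ}
    (hx : x ∈ Ioc (signedCellCorner m b : ℝ) (signedCellCorner m b + 1)) : |x| ≤ m := by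
  have : (1 : ℝ) ≤ m := by exact_mod_cast m.pos
  cases b <;> simp only [signedCellCorner, mem_Ioc] at hx <;> push_cast at hx <;>
    rw [abs_le] <;> constructor <;> linarith

lemma card_mul_two_pow_le_volume {d : ℕ} {γ : ℝ} (S : Finset (Fin d → ℕ+))
    (hS : ∀ j ∈ S, lamMulti j ≤ γ) :
    (S.card * 2 ^ d : ℝ≥0∞) ≤
      volume {x : Fin d → ℝ | (∑ i, |x i| ^ (2 : ℝ)) ^ (1 / 2 : ℝ) ≤ √γ} := by
  classical
  let corner : (Fin d → ℕ+) × (Fin d → Bool) → Fin d → ℤ :=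
    fun p i => signedCellCorner (p.1 i) (p.2 i)
  have hcorner : Injective corner := fun p q h => by
    have hi := fun i => signedCellCorner_inj.mp (congr_fun h i)
    exact Prod.ext (funext fun i => (hi i).1) (funext fun i => (hi i).2)
  have hcard : ((S ×ˢ Finset.univ).image corner).card = S.card * 2 ^ d := by
    simp [Finset.card_image_of_injective _ hcorner, Finset.card_product]
  have hsub : ∀ z ∈ (S ×ˢ Finset.univ).image corner,
      intUnitCube z ⊆ {x | (∑ i, |x i| ^ (2 : ℝ)) ^ (1 / 2 : ℝ) ≤ √γ} := by
    simp only [Finset.mem_image, Finset.mem_product]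
    rintro _ ⟨⟨j, b⟩, ⟨hj, -⟩, rfl⟩ x hx
    have habs : ∀ i, |x i| ≤ j i := fun i =>
      abs_le_of_mem_Ioc_signedCellCorner (hx i (mem_univ i))
    rw [mem_ofPred_eq, sqrt_eq_rpow]
    refine rpow_le_rpow (Finset.sum_nonneg fun i _ => by positivity) ?_ (by norm_num)
    calc ∑ i, |x i| ^ (2 : ℝ) ≤ lamMulti j := Finset.sum_le_sum fun i _ => by
          rw [rpow_two]; exact pow_le_pow_left₀ (abs_nonneg _) (habs i) 2
      _ ≤ γ := hS j hj
  exact_mod_cast hcard ▸ card_le_volume_of_intUnitCube_subset _ hsub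

lemma card_mul_two_pow_le {d : ℕ} (hd : d ≠ 0) {γ : ℝ} (S : Finset (Fin d → ℕ+))
    (hS : ∀ j ∈ S, lamMulti j ≤ γ) :
    (S.card : ℝ) * 2 ^ d ≤ √(π * γ) ^ d / Gamma (d / 2 + 1) := by
  have : Nonempty (Fin d) := ⟨⟨0, Nat.pos_of_ne_zero hd⟩⟩
  have hvol := card_mul_two_pow_le_volume S hS
  rw [volume_sum_rpow_le (ι := Fin d) one_le_two, Fintype.card_fin,
    ← ENNReal.ofReal_pow (sqrt_nonneg _), ← ENNReal.ofReal_mul (by positivity)] at hvol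
  have hΓ : 2 * Gamma (1 / 2 + 1) = √π := by
    rw [Gamma_add_one (by norm_num), Gamma_one_half_eq]; ring
  rw [hΓ, ← mul_div_assoc, ← mul_pow, ← sqrt_mul' γ pi_pos.le, mul_comm γ] at hvol
  exact_mod_cast (ENNReal.le_ofReal_iff_toReal_le (by finiteness) (by positivity)).mp hvol

end LatticeCount

lemma sqrt_mul_pow_div_Gamma_add_one {d : ℕ} (hd : d ≠ 0) {r : ℝ} (hr : 0 ≤ r) :
    √(π * r) ^ d / Gamma (d / 2 + 1) =
      2 * π ^ ((d : ℝ) / 2) * r ^ ((d : ℝ) / 2) / (d * Gamma (d / 2)) := by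
  have : (0 : ℝ) < d := by positivity
  rw [sqrt_eq_rpow, ← rpow_natCast, ← rpow_mul (by positivity), mul_rpow pi_pos.le hr,
    Gamma_add_one (by positivity), one_div_mul_eq_div]
  field_simp

theorem stmt_18_general (d : ℕ) (hd : 1 ≤ d) (σ : ℝ) (hσ : 0 ≤ σ)
    (n : Fin d → ℕ)
    (γ : ℝ) (hγ0 : 0 < γ)
    {Ω : Type*} [MeasureSpace Ω] [IsProbabilityMeasure (ℙ : Measure Ω)]
    (W : ((i : Fin d) → Fin (n i)) → Ω → ℝ)
    (hWindep : iIndepFun W ℙ)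
    (hWgauss : ∀ k, Measure.map (W k) ℙ = gaussianReal 0 1)
    (ε : ((i : Fin d) → Fin (n i)) → ℝ) (εmax : ℝ) (hε : ∀ k, |ε k| ≤ εmax) :
    ∫ ω, (∑' j : Fin d → ℕ+,
        if lamMulti j ≤ γ then
          lamMulti j ^ σ *
            ((π ^ d / ∏ i, (n i : ℝ)) * ∑ k : (i : Fin d) → Fin (n i),
              ε k * W k ω * xiMulti j (fun i => gridPt (n i) ((k i).val + 1))) ^ 2
        else 0) ∂(ℙ : Measure Ω)
      ≤ εmax ^ 2 * (2 * π ^ ((3 * (d : ℝ)) / 2) / (d * Real.Gamma ((d : ℝ) / 2))) *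
          γ ^ (σ + (d : ℝ) / 2) / ∏ i, (n i : ℝ) := by
  set P : ℝ := ∏ i, (n i : ℝ)
  have hfin := finite_setOf_lamMulti_le d γ
  have hmode : ∀ j, ∫ ω, ((π ^ d / P) * ∑ k, ε k * W k ω *
      xiMulti j (fun i => gridPt (n i) ((k i).val + 1))) ^ 2 ≤ (2 * π) ^ d * εmax ^ 2 / P :=
    fun j => (integral_sq_const_mul_sum_le hWindep hWgauss hε
      (fun k => xiMulti_sq_le j _) _).trans_eq <| by
        simp only [P, Fintype.card_pi, Fintype.card_fin, Nat.cast_prod, div_pow, mul_pow]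
        field_simp
  calc _ = ∑ j ∈ hfin.toFinset, ∫ ω, lamMulti j ^ σ * ((π ^ d / P) * ∑ k, ε k * W k ω *
          xiMulti j (fun i => gridPt (n i) ((k i).val + 1))) ^ 2 := by
        simp_rw [tsum_ite_eq_sum_toFinset hfin]
        exact integral_finsetSum _ fun j _ =>
          (integrable_sq_const_mul_sum hWgauss _ _ _).const_mul _
    _ ≤ ∑ j ∈ hfin.toFinset, γ ^ σ * ((2 * π) ^ d * εmax ^ 2 / P) :=
        Finset.sum_le_sum fun j hj => by
          rw [integral_const_mul]
          exact mul_le_mul (rpow_le_rpow (lamMulti_nonneg j) (by simpa using hj) hσ) (hmode j)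
            (integral_nonneg fun _ => sq_nonneg _) (by positivity)
    _ = hfin.toFinset.card * 2 ^ d * (π ^ d * γ ^ σ * εmax ^ 2 / P) := by
        rw [Finset.sum_const, nsmul_eq_mul, mul_pow]; ring
    _ ≤ √(π * γ) ^ d / Gamma (d / 2 + 1) * (π ^ d * γ ^ σ * εmax ^ 2 / P) := by
        gcongr
        exact card_mul_two_pow_le (by omega) _ fun j hj => by simpa using hj
    _ = _ := by
        rw [sqrt_mul_pow_div_Gamma_add_one (by omega) hγ0.le, rpow_add hγ0,
          show (3 * (d : ℝ)) / 2 = d / 2 + d by ring, rpow_add pi_pos, rpow_natCast]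
        ring

theorem stmt_18 (d : ℕ) (hd : 1 ≤ d) (σ : ℝ) (hσ : 0 ≤ σ)
    (n : Fin d → ℕ) (hn : ∀ i, 1 ≤ n i)
    (γ : ℝ) (hγ0 : 0 < γ) (hγ : ∀ i, γ < ((n i : ℝ)) ^ 2)
    {Ω : Type*} [MeasureSpace Ω] [IsProbabilityMeasure (ℙ : Measure Ω)]
    (W : ((i : Fin d) → Fin (n i)) → Ω → ℝ)
    (hWmeas : ∀ k, Measurable (W k))
    (hWindep : iIndepFun W ℙ)
    (hWgauss : ∀ k, Measure.map (W k) ℙ = gaussianReal 0 1)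
    (ε : ((i : Fin d) → Fin (n i)) → ℝ) (εmax : ℝ) (hε : ∀ k, |ε k| ≤ εmax) :
    ∫ ω, (∑' j : Fin d → ℕ+,
        if lamMulti j ≤ γ then
          lamMulti j ^ σ *
            ((π ^ d / ∏ i, (n i : ℝ)) * ∑ k : (i : Fin d) → Fin (n i),
              ε k * W k ω * xiMulti j (fun i => gridPt (n i) ((k i).val + 1))) ^ 2
        else 0) ∂(ℙ : Measure Ω)
      ≤ εmax ^ 2 * (2 * π ^ ((3 * (d : ℝ)) / 2) / (d * Real.Gamma ((d : ℝ) / 2))) *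
          γ ^ (σ + (d : ℝ) / 2) / ∏ i, (n i : ℝ) :=
  stmt_18_general d hd σ hσ n γ hγ0 W hWindep hWgauss ε εmax hε
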